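/- Let $S$, $A$, $M$ be real symmetric $p\times p$ matrices and $\mu>0$, and set $K=\mu A - S - M$. Then $\Theta^{\star} := \dfrac{K+\sqrt{K^2+4\mu I}}{2\mu}$ is the unique minimizer over the set of real symmetric positive definite $p\times p$ matrices $\Theta$ of the function $\mathcal{L}(\Theta) = -\log\det\Theta + \mathrm{tr}(S\Theta) + \mathrm{tr}\big(M^T(\Theta-A)\big) + \tfrac{\mu}{2}\|\Theta-A\|_F^2$. -/

import Mathlib

open Matrix

/-- The Frobenius norm of a real square matrix. -/
noncomputable def frobeniusNorm {p : ℕ} (A : Matrix (Fin p) (Fin p) ℝ) : ℝ :=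
  Real.sqrt (∑ i, ∑ j, (A i j) ^ 2)

/-- The positive semidefinite square root of a positive semidefinite matrix (removed from
Mathlib; restored here with its December 2024 definition). -/
noncomputable def Matrix.PosSemidef.sqrt {n : Type*} [Fintype n] [DecidableEq n]
    {A : Matrix n n ℝ} (hA : A.PosSemidef) : Matrix n n ℝ :=
  hA.1.eigenvectorUnitary.1 * diagonal ((↑) ∘ (√·) ∘ hA.1.eigenvalues) *
  (star hA.1.eigenvectorUnitary : Matrix n n ℝ)

/-!
Writing `K = ∑ λᵢ uᵢuᵢᵀ`, the candidate is `Θ⋆ = ∑ tᵢ uᵢuᵢᵀ` where `tᵢ > 0` is the positive root of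
`μ t² - λᵢ t - 1 = 0`; hence `Θ⋆` is positive definite and `Θ⋆⁻¹ = μ Θ⋆ - K = S + M + μ (Θ⋆ - A)`,
which is the first-order optimality condition. Expanding `𝓛` around `Θ⋆` in the direction
`Δ = Θ - Θ⋆`, the linear terms cancel against `tr (Θ⋆⁻¹ Δ)` and
`𝓛 Θ - 𝓛 Θ⋆ = D(Θ, Θ⋆) + (μ / 2) ‖Δ‖_F²`, where
`D(Θ, Θ⋆) = tr (Θ⋆⁻¹ Θ) - log det (Θ⋆⁻¹ Θ) - p ≥ 0` because `log x ≤ x - 1` on the (positive)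
eigenvalues of `Θ⋆⁻¹ Θ`.
-/

open scoped MatrixOrder

lemma Matrix.trace_transpose_mul_of_transpose_eq {n R : Type*} [Fintype n] [CommSemiring R]
    (X : Matrix n n R) {Y : Matrix n n R} (hY : Yᵀ = Y) : (Xᵀ * Y).trace = (X * Y).trace := by
  rw [← hY, trace_transpose_mul, hY]

section Frobenius

variable {p : ℕ}

lemma frobeniusNorm_sq (X : Matrix (Fin p) (Fin p) ℝ) :
    frobeniusNorm X ^ 2 = (Xᵀ * X).trace := by
  rw [frobeniusNorm, Real.sq_sqrt (by positivity), trace, Finset.sum_comm]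
  simp only [diag, mul_apply, transpose_apply, sq]

lemma frobeniusNorm_add_sq (X Y : Matrix (Fin p) (Fin p) ℝ) :
    frobeniusNorm (X + Y) ^ 2 = frobeniusNorm X ^ 2 + 2 * (Xᵀ * Y).trace + frobeniusNorm Y ^ 2 := by
  have hYX : (Yᵀ * X).trace = (Xᵀ * Y).trace := by
    rw [← trace_transpose, transpose_mul, transpose_transpose]
  simp only [frobeniusNorm_sq, transpose_add, add_mul, mul_add, trace_add, hYX]
  ring

lemma frobeniusNorm_sq_pos {X : Matrix (Fin p) (Fin p) ℝ} (hX : X ≠ 0) :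
    0 < frobeniusNorm X ^ 2 := by
  rw [frobeniusNorm_sq, ← conjTranspose_eq_transpose_of_trivial]
  exact (posSemidef_conjTranspose_mul_self X).trace_nonneg.lt_of_ne
    (Ne.symm (trace_conjTranspose_mul_self_eq_zero_iff.not.mpr hX))

end Frobenius

namespace Matrix.PosDef

variable {n : Type*} [Fintype n] [DecidableEq n]

lemma log_det_le_trace_sub_card {B : Matrix n n ℝ} (hB : B.PosDef) :
    Real.log B.det ≤ B.trace - Fintype.card n := by
  have hdet : B.det = ∏ i, hB.1.eigenvalues i := by simpa using hB.1.det_eq_prod_eigenvalues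
  have htrace : B.trace = ∑ i, hB.1.eigenvalues i := by simpa using hB.1.trace_eq_sum_eigenvalues
  rw [hdet, htrace, Real.log_prod fun i _ => (hB.eigenvalues_pos i).ne']
  calc ∑ i, Real.log (hB.1.eigenvalues i) ≤ ∑ i, (hB.1.eigenvalues i - 1) :=
        Finset.sum_le_sum fun i _ => Real.log_le_sub_one_of_pos (hB.eigenvalues_pos i)
    _ = ∑ i, hB.1.eigenvalues i - Fintype.card n := by simp [Finset.sum_sub_distrib]

/-- `Q * Θ` is similar to the positive definite `B * Θ * star B`, where `Q = star B * B`. -/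
lemma log_det_mul_le_trace_mul_sub_card {Q Θ : Matrix n n ℝ} (hQ : Q.PosDef) (hΘ : Θ.PosDef) :
    Real.log (Q * Θ).det ≤ (Q * Θ).trace - Fintype.card n := by
  obtain ⟨B, rfl⟩ := CStarAlgebra.nonneg_iff_eq_star_mul_self.mp hQ.posSemidef.nonneg
  have hB : IsUnit B := isUnit_of_mul_isUnit_right hQ.isUnit
  have hBΘ : (B * Θ * star B).PosDef := (IsUnit.posDef_star_right_conjugate_iff hB).mpr hΘ
  have hdet : (B * Θ * star B).det = (star B * B * Θ).det := by
    simp only [det_mul]; ring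
  have htrace : (B * Θ * star B).trace = (star B * B * Θ).trace := by
    rw [trace_mul_comm, Matrix.mul_assoc]
  rw [← hdet, ← htrace]
  exact hBΘ.log_det_le_trace_sub_card

end Matrix.PosDef

section Lagrangian

variable {p : ℕ}

noncomputable def augmentedLagrangian (S A M : Matrix (Fin p) (Fin p) ℝ) (μ : ℝ)
    (Θ : Matrix (Fin p) (Fin p) ℝ) : ℝ :=
  -Real.log Θ.det + (S * Θ).trace + (Mᵀ * (Θ - A)).trace + μ / 2 * frobeniusNorm (Θ - A) ^ 2

lemma augmentedLagrangian_add_le_of_inv_eq {S A M T Θ : Matrix (Fin p) (Fin p) ℝ} {μ : ℝ}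
    (hT : T.PosDef) (hΘ : Θ.PosDef) (hstat : T⁻¹ = S + M + μ • (T - A)) :
    augmentedLagrangian S A M μ T + μ / 2 * frobeniusNorm (Θ - T) ^ 2 ≤
      augmentedLagrangian S A M μ Θ := by
  have hsym : (Θ - T)ᵀ = Θ - T := by
    simpa only [conjTranspose_eq_transpose_of_trivial] using (hΘ.1.sub hT.1).eq
  have hlogdet : Real.log (T⁻¹ * Θ).det = Real.log Θ.det - Real.log T.det := by
    rw [det_mul, det_nonsing_inv, Ring.inverse_eq_inv, Real.log_mul (inv_ne_zero hT.det_pos.ne')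
      hΘ.det_pos.ne', Real.log_inv]
    ring
  have htrace : (T⁻¹ * Θ).trace - p =
      (S * (Θ - T)).trace + (M * (Θ - T)).trace + μ * ((T - A) * (Θ - T)).trace := by
    have hp : (T⁻¹ * T).trace = p := by
      rw [nonsing_inv_mul T ((isUnit_iff_isUnit_det T).mp hT.isUnit)]; simp
    rw [← hp, ← trace_sub, ← mul_sub, hstat]
    simp only [add_mul, smul_mul, trace_add, trace_smul, smul_eq_mul]
  have hstein := hT.inv.log_det_mul_le_trace_mul_sub_card hΘ
  rw [hlogdet, Fintype.card_fin] at hstein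
  have hlinear : (S * Θ).trace = (S * T).trace + (S * (Θ - T)).trace := by
    rw [← trace_add, ← mul_add, add_sub_cancel]
  have hsplit : Θ - A = (T - A) + (Θ - T) := by abel
  unfold augmentedLagrangian
  rw [hsplit, frobeniusNorm_add_sq, trace_transpose_mul_of_transpose_eq _ hsym, mul_add, trace_add,
    trace_transpose_mul_of_transpose_eq _ hsym, hlinear]
  linarith

end Lagrangian

/-- The positive root `t` of `μ t ^ 2 - x t - 1 = 0`. -/
noncomputable def quadRoot (μ x : ℝ) : ℝ := (x + √(x ^ 2 + 4 * μ)) / (2 * μ)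

section QuadRoot

variable {μ : ℝ}

@[fun_prop]
lemma continuous_quadRoot : Continuous (quadRoot μ) := by
  unfold quadRoot; fun_prop

lemma quadRoot_pos (hμ : 0 < μ) (x : ℝ) : 0 < quadRoot μ x := by
  have hx : |x| < √(x ^ 2 + 4 * μ) := by
    rw [← Real.sqrt_sq_eq_abs]; exact Real.sqrt_lt_sqrt (sq_nonneg x) (by linarith)
  unfold quadRoot
  exact div_pos (by linarith [neg_abs_le x]) (by positivity)

lemma quadRoot_mul_sub (hμ : 0 < μ) (x : ℝ) : quadRoot μ x * (μ * quadRoot μ x - x) = 1 := by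
  have hsq := Real.sq_sqrt (show 0 ≤ x ^ 2 + 4 * μ by positivity)
  unfold quadRoot
  field_simp
  linear_combination hsq

end QuadRoot

namespace Matrix

variable {n : Type*} [Fintype n] [DecidableEq n]

lemma PosSemidef.sqrt_eq_cfc {A : Matrix n n ℝ} (hA : A.PosSemidef) :
    hA.sqrt = cfc Real.sqrt A := by
  rw [hA.1.cfc_eq]; rfl

namespace IsHermitian

variable {K : Matrix n n ℝ}

lemma posDef_cfc (hK : K.IsHermitian) {f : ℝ → ℝ} (hf : ∀ x, 0 < f x) : (cfc f K).PosDef :=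
  ((cfc_isStrictlyPositive_iff f K (K.finite_real_spectrum.continuousOn f)).mpr
    fun x _ => hf x).posDef

lemma sqrt_sq_add_smul_one (hK : K.IsHermitian) {c : ℝ} (hP : (K ^ 2 + c • 1).PosSemidef) :
    hP.sqrt = cfc (fun x => √(x ^ 2 + c)) K := by
  have hpoly : K ^ 2 + c • (1 : Matrix n n ℝ) = cfc (fun x => x ^ 2 + c) K := by
    rw [cfc_add .., cfc_pow_id .., cfc_const ..]
    simp [Algebra.algebraMap_eq_smul_one]
  rw [hP.sqrt_eq_cfc, hpoly, ← cfc_comp' ..]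

lemma inv_smul_add_sqrt_eq_cfc_quadRoot (hK : K.IsHermitian) {μ : ℝ}
    (hP : (K ^ 2 + (4 * μ) • 1).PosSemidef) :
    (2 * μ)⁻¹ • (K + hP.sqrt) = cfc (quadRoot μ) K := by
  have hroot : quadRoot μ = fun x => (2 * μ)⁻¹ * (x + √(x ^ 2 + 4 * μ)) := by
    funext x; rw [quadRoot, div_eq_inv_mul]
  rw [hK.sqrt_sq_add_smul_one hP, hroot, cfc_const_mul .., cfc_add .., cfc_id' ..]

lemma cfc_quadRoot_mul_sub (hK : K.IsHermitian) {μ : ℝ} (hμ : 0 < μ) :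
    cfc (quadRoot μ) K * (μ • cfc (quadRoot μ) K - K) = 1 := by
  have hsub : μ • cfc (quadRoot μ) K - K = cfc (fun x => μ * quadRoot μ x - x) K := by
    rw [cfc_sub .., cfc_const_mul .., cfc_id' ..]
  rw [hsub, ← cfc_mul ..]
  simp only [quadRoot_mul_sub hμ]
  exact cfc_const_one ..

end IsHermitian

end Matrix

/-- The `Θ`-update of the split Bregman iteration: with `K = μ A - S - M`, the
matrix `Θ⋆ = (K + √(K ^ 2 + 4μ I)) / (2μ)` is the unique minimizer, over
symmetric positive definite matrices, of the augmented Lagrangian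
`Θ ↦ -log det Θ + tr (S Θ) + tr (Mᵀ (Θ - A)) + (μ / 2) ‖Θ - A‖_F ^ 2`.
The hypothesis `hP` is automatically satisfied since `K = μ A - S - M` is
symmetric and `μ > 0`. -/
theorem theta_update_is_unique_minimizer (p : ℕ)
    (S A M : Matrix (Fin p) (Fin p) ℝ)
    (hS : S.IsHermitian) (hA : A.IsHermitian) (hM : M.IsHermitian)
    (μ : ℝ) (hμ : 0 < μ) (K : Matrix (Fin p) (Fin p) ℝ) (hKdef : K = μ • A - S - M)
    (hP : (K ^ 2 + (4 * μ) • (1 : Matrix (Fin p) (Fin p) ℝ)).PosSemidef)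
    (L : Matrix (Fin p) (Fin p) ℝ → ℝ)
    (hL : ∀ Θ, L Θ = -Real.log Θ.det + (S * Θ).trace + (Mᵀ * (Θ - A)).trace +
      μ / 2 * frobeniusNorm (Θ - A) ^ 2) :
    ((2 * μ)⁻¹ • (K + hP.sqrt)).PosDef ∧
      ∀ Θ : Matrix (Fin p) (Fin p) ℝ, Θ.PosDef → Θ ≠ (2 * μ)⁻¹ • (K + hP.sqrt) →
        L ((2 * μ)⁻¹ • (K + hP.sqrt)) < L Θ := by
  subst hKdef
  have hK : (μ • A - S - M).IsHermitian := ((hA.smul (.all μ)).sub hS).sub hM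
  rw [hK.inv_smul_add_sqrt_eq_cfc_quadRoot hP, show L = augmentedLagrangian S A M μ from funext hL]
  have hT : (cfc (quadRoot μ) (μ • A - S - M)).PosDef := hK.posDef_cfc (quadRoot_pos hμ)
  have hstat : (cfc (quadRoot μ) (μ • A - S - M))⁻¹ =
      S + M + μ • (cfc (quadRoot μ) (μ • A - S - M) - A) := by
    rw [inv_eq_right_inv (hK.cfc_quadRoot_mul_sub hμ)]
    module
  refine ⟨hT, fun Θ hΘ hne => ?_⟩
  have hgap := frobeniusNorm_sq_pos (sub_ne_zero.mpr hne)
  have hle := augmentedLagrangian_add_le_of_inv_eq hT hΘ hstat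
  linarith [mul_pos (half_pos hμ) hgap]
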